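/- Suppose 𝒫 is stable under F°-pasting. Let X ∈ L¹_𝒫, let σ ≤ τ be F°-stopping times each taking finitely many values, and let P ∈ 𝒫. For each P' ∈ 𝒫(F°_σ,P), let Y_{P'} be an F°_τ-measurable, P'-integrable random variable that is a P'-essential supremum of the family {E^{P''}[X|F°_τ] : P'' ∈ 𝒫(F°_τ,P')}. Then every P-essential supremum of the family {E^{P'}[Y_{P'}|F°_σ] : P' ∈ 𝒫(F°_σ,P)} is P-a.s. equal to every P-essential supremum of the family {E^{P'}[X|F°_σ] : P' ∈ 𝒫(F°_σ,P)}. (That is, stability under F°-pasting implies F°-time-consistency of 𝒫 on L¹_𝒫.) -/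

import Mathlib

/-!
One inequality is the tower property: `E^{P'}[X | F_σ] = E^{P'}[E^{P'}[X | F_τ] | F_σ]` is
at most `E^{P'}[Y_{P'} | F_σ]`, and inequalities between `F_σ`-measurable functions pass from `P'`
to `P` because the two measures agree on `F_σ`.

For the other, pasting `Q₁` and `Q₂` over `{E^{Q₂}[X | F_τ] ≤ E^{Q₁}[X | F_τ]}` shows that the
family `{E^Q[X | F_τ] : Q ∈ 𝔓(F_τ, P')}` is upward directed. Its integrable essential supremum
`Y_{P'}` is then the increasing limit of `E^{Q_n}[X | F_τ]` for some sequence `Q_n`, so by monotone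
convergence `E^{P'}[Y_{P'} | F_σ]` is the increasing limit of the `E^{Q_n}[X | F_σ]`, all of which
lie in the second family.
-/

open MeasureTheory Set Filter

noncomputable section

/-- The canonical path space: continuous paths in `ℝ^d` starting at `0`
(paths indexed by `ℝ`; only the restriction to `[0,T]` is ever used). -/
def PathSpace (d : ℕ) : Type :=
  {ω : C(ℝ, EuclideanSpace ℝ (Fin d)) // ω 0 = 0}

/-- The raw σ-algebra `F°_t = σ(B_s ; 0 ≤ s ≤ t)` generated by the canonical process. -/
def rawSA (d : ℕ) (t : ℝ) : MeasurableSpace (PathSpace d) :=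
  ⨆ s ∈ Set.Icc (0 : ℝ) t, MeasurableSpace.comap (fun ω : PathSpace d => ω.1 s) inferInstance

lemma rawSA_mono {d : ℕ} : Monotone (rawSA d) := by
  intro s t hst
  refine iSup₂_le fun u hu => ?_
  exact le_iSup₂_of_le u ⟨hu.1, hu.2.trans hst⟩ le_rfl

/-- The raw filtration `F°`, as a filtration indexed by `ℝ` (constant after time `T`),
with ambient σ-algebra `F°_T`. -/
def rawFilt (T : ℝ) (d : ℕ) : Filtration ℝ (rawSA d T) where
  seq t := rawSA d (min t T)
  mono' := fun _ _ hst => rawSA_mono (min_le_min hst le_rfl)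
  le' := fun t => rawSA_mono (min_le_right t T)

/-- A bounded function. -/
def BddFun {α : Type*} (f : α → ℝ) : Prop := ∃ C : ℝ, ∀ x, |f x| ≤ C

/-- `Y` is a `P`-essential supremum of the family `F` of random variables. -/
def IsEssSupOf {α : Type*} {m0 : MeasurableSpace α} (P : @Measure α m0) (F : Set (α → ℝ))
    (Y : α → ℝ) : Prop :=
  (∀ f ∈ F, f ≤ᵐ[P] Y) ∧ ∀ Z : α → ℝ, (∀ f ∈ F, f ≤ᵐ[P] Z) → Y ≤ᵐ[P] Z

/-- Two measures agree on the σ-algebra `G`. -/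
def EqOnSA {α : Type*} {m0 : MeasurableSpace α} (G : MeasurableSpace α)
    (P Q : @Measure α m0) : Prop :=
  ∀ A : Set α, MeasurableSet[G] A → P A = Q A

/-- `𝔓(G, P) = {P' ∈ 𝔓 : P' = P on G}`. -/
def MSet {α : Type*} {m0 : MeasurableSpace α} (𝔓 : Set (@Measure α m0))
    (G : MeasurableSpace α) (P : @Measure α m0) : Set (@Measure α m0) :=
  {Q ∈ 𝔓 | EqOnSA G Q P}

/-- The family `{E^{P'}[X | G] : P' ∈ 𝔓(G, P)}` of conditional expectations. -/
def condExpFam {α : Type*} {m0 : MeasurableSpace α} (𝔓 : Set (@Measure α m0))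
    (G : MeasurableSpace α) (P : @Measure α m0) (X : α → ℝ) : Set (α → ℝ) :=
  {g | ∃ Q ∈ MSet 𝔓 G P, g = condExp G Q X}

/-- `X ∈ L¹_𝔓` : `mT`-measurable with `sup_{P ∈ 𝔓} E^P[|X|] < ∞`. -/
def MemL1 {α : Type*} {m0 : MeasurableSpace α} (mT : MeasurableSpace α)
    (𝔓 : Set (@Measure α m0)) (X : α → ℝ) : Prop :=
  Measurable[mT] X ∧ (∀ P ∈ 𝔓, Integrable X P) ∧ ∃ M : ℝ, ∀ P ∈ 𝔓, ∫ ω, |X ω| ∂P ≤ M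

/-- `Pb` is the pasting of `(P₁, P₂)` over `(Λ, G)` under `P`, characterized through
integrals of bounded measurable functions. -/
def IsPastingOf {α : Type*} {m0 : MeasurableSpace α} (mT : MeasurableSpace α)
    (G : MeasurableSpace α) (P P₁ P₂ Pb : @Measure α m0) (Λ : Set α) : Prop :=
  ∀ h : α → ℝ, Measurable[mT] h → BddFun h →
    ∫ x, h x ∂Pb
      = ∫ x, (Λ.indicator (condExp G P₁ h) x + Λᶜ.indicator (condExp G P₂ h) x) ∂P

/-- `𝔓` is stable under `F°`-pasting (along finite-valued `F°`-stopping times). -/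
def StableUnderPasting (T : ℝ) (d : ℕ)
    (𝔓 : Set (@Measure (PathSpace d) (rawSA d T))) : Prop :=
  ∀ P ∈ 𝔓, ∀ τ : PathSpace d → ℝ, ∀ hτ : IsStoppingTime (rawFilt T d) (fun ω => (τ ω : WithTop ℝ)),
    (Set.range τ).Finite → (∀ ω, τ ω ∈ Set.Icc (0 : ℝ) T) →
    ∀ Λ : Set (PathSpace d), MeasurableSet[hτ.measurableSpace] Λ →
    ∀ P₁ ∈ MSet 𝔓 hτ.measurableSpace P, ∀ P₂ ∈ MSet 𝔓 hτ.measurableSpace P,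
    ∀ Pb : @Measure (PathSpace d) (rawSA d T),
      IsPastingOf (rawSA d T) hτ.measurableSpace P P₁ P₂ Pb Λ → Pb ∈ 𝔓

end

open Topology

namespace EqOnSA

variable {α : Type*} {m m' m0 : MeasurableSpace α} {P Q R : Measure[m0] α}

lemma symm (h : EqOnSA m P Q) : EqOnSA m Q P := fun A hA => (h A hA).symm

lemma trans (h₁ : EqOnSA m P Q) (h₂ : EqOnSA m Q R) : EqOnSA m P R :=
  fun A hA => (h₁ A hA).trans (h₂ A hA)

lemma mono (h : EqOnSA m' P Q) (hmm' : m ≤ m') : EqOnSA m P Q := fun A hA => h A (hmm' A hA)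

lemma trim_eq (h : EqOnSA m P Q) (hm : m ≤ m0) : P.trim hm = Q.trim hm :=
  @Measure.ext α m _ _ fun s hs => by
    rw [trim_measurableSet_eq hm hs, trim_measurableSet_eq hm hs, h s hs]

lemma ae_le (h : EqOnSA m P Q) (hm : m ≤ m0) {f g : α → ℝ} (hf : StronglyMeasurable[m] f)
    (hg : StronglyMeasurable[m] g) (hfg : f ≤ᵐ[P] g) : f ≤ᵐ[Q] g :=
  ae_le_of_ae_le_trim (h.trim_eq hm ▸ hf.ae_le_trim_of_stronglyMeasurable hm hg hfg)

lemma ae_eq (h : EqOnSA m P Q) (hm : m ≤ m0) {f g : α → ℝ} (hf : StronglyMeasurable[m] f)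
    (hg : StronglyMeasurable[m] g) (hfg : f =ᵐ[P] g) : f =ᵐ[Q] g :=
  ae_eq_of_ae_eq_trim (h.trim_eq hm ▸ hf.ae_eq_trim_of_stronglyMeasurable hm hg hfg)

lemma integrable (h : EqOnSA m P Q) (hm : m ≤ m0) {f : α → ℝ} (hf : StronglyMeasurable[m] f)
    (hfP : Integrable f P) : Integrable f Q :=
  integrable_of_integrable_trim hm (h.trim_eq hm ▸ hfP.trim hm hf)

lemma integral_eq (h : EqOnSA m P Q) (hm : m ≤ m0) {f : α → ℝ} (hf : StronglyMeasurable[m] f) :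
    ∫ x, f x ∂P = ∫ x, f x ∂Q := by
  rw [integral_trim hm hf, integral_trim hm hf, h.trim_eq hm]

end EqOnSA

section CondExp

variable {α : Type*} {m m' m0 : MeasurableSpace α}

lemma condExp_ae_eq_of_eqOnSA (hmm' : m ≤ m') (hm' : m' ≤ m0) {P Q : Measure[m0] α}
    [IsFiniteMeasure P] [IsFiniteMeasure Q] (h : EqOnSA m' Q P) {f : α → ℝ}
    (hf : StronglyMeasurable[m'] f) (hfP : Integrable f P) :
    Q[f|m] =ᵐ[P] P[f|m] := by
  have hm : m ≤ m0 := hmm'.trans hm'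
  have hQm' : StronglyMeasurable[m'] (Q[f|m]) := stronglyMeasurable_condExp.mono hmm'
  refine ae_eq_condExp_of_forall_setIntegral_eq hm hfP
    (fun _ _ _ => (h.integrable hm' hQm' integrable_condExp).integrableOn) (fun s hs _ => ?_)
    stronglyMeasurable_condExp.aestronglyMeasurable
  have hs' : MeasurableSet[m'] s := hmm' s hs
  have setIntegral_eq : ∀ φ : α → ℝ, StronglyMeasurable[m'] φ →
      ∫ x in s, φ x ∂P = ∫ x in s, φ x ∂Q := fun φ hφ => by
    rw [← integral_indicator (hm' s hs'), ← integral_indicator (hm' s hs')]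
    exact h.symm.integral_eq hm' (hφ.indicator hs')
  rw [setIntegral_eq _ hQm', setIntegral_eq _ hf]
  exact setIntegral_condExp hm (h.symm.integrable hm' hf hfP) hs

lemma condExp_ae_eq_condExp_condExp_of_eqOnSA (hmm' : m ≤ m') (hm' : m' ≤ m0)
    {P Q : Measure[m0] α} [IsFiniteMeasure P] [IsFiniteMeasure Q] (h : EqOnSA m' Q P)
    (f : α → ℝ) : Q[f|m] =ᵐ[P] P[Q[f|m']|m] := by
  have hm : m ≤ m0 := hmm'.trans hm'
  have tower : Q[Q[f|m']|m] =ᵐ[Q] Q[f|m] := condExp_condExp_of_le hmm' hm'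
  refine ((h.mono hmm').ae_eq hm stronglyMeasurable_condExp stronglyMeasurable_condExp
    tower.symm).trans ?_
  exact condExp_ae_eq_of_eqOnSA hmm' hm' h stronglyMeasurable_condExp
    (h.integrable hm' stronglyMeasurable_condExp integrable_condExp)

end CondExp

section MonotoneConvergence

variable {α : Type*} {m m0 : MeasurableSpace α} {μ : Measure[m0] α}

lemma exists_ae_tendsto_of_monotone_of_ae_le {g : ℕ → α → ℝ} {Y : α → ℝ}
    (hg : ∀ n, Integrable (g n) μ) (hY : Integrable Y μ)
    (hmono : ∀ᵐ x ∂μ, Monotone fun n => g n x) (hle : ∀ n, g n ≤ᵐ[μ] Y) :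
    ∃ G : α → ℝ, Integrable G μ ∧ G ≤ᵐ[μ] Y ∧
      ∀ᵐ x ∂μ, Tendsto (fun n => g n x) atTop (𝓝 (G x)) := by
  have hbdd : ∀ᵐ x ∂μ, (Monotone fun n => g n x) ∧ ∀ n, g n x ≤ Y x :=
    hmono.and (ae_all_iff.2 hle)
  have htend : ∀ᵐ x ∂μ, Tendsto (fun n => g n x) atTop (𝓝 (⨆ n, g n x)) := by
    filter_upwards [hbdd] with x hx
    exact tendsto_atTop_ciSup hx.1 ⟨Y x, forall_mem_range.2 hx.2⟩
  refine ⟨fun x => ⨆ n, g n x, integrable_of_le_of_le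
    (aestronglyMeasurable_of_tendsto_ae atTop (fun n => (hg n).1) htend) ?_ ?_ (hg 0) hY, ?_, htend⟩
  · filter_upwards [hmono, htend] with x hx hxt
    exact hx.ge_of_tendsto hxt 0
  all_goals
    filter_upwards [hbdd] with x hx
    exact ciSup_le hx.2

lemma ae_tendsto_condExp_of_monotone (hm : m ≤ m0) [SigmaFinite (μ.trim hm)]
    {g : ℕ → α → ℝ} {Y : α → ℝ} (hg : ∀ n, Integrable (g n) μ) (hY : Integrable Y μ)
    (hmono : ∀ᵐ x ∂μ, Monotone fun n => g n x)
    (htend : ∀ᵐ x ∂μ, Tendsto (fun n => g n x) atTop (𝓝 (Y x))) :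
    ∀ᵐ x ∂μ, Tendsto (fun n => μ[g n|m] x) atTop (𝓝 (μ[Y|m] x)) := by
  have hle : ∀ n, g n ≤ᵐ[μ] Y := fun n => by
    filter_upwards [hmono, htend] with x hx hxt
    exact hx.ge_of_tendsto hxt n
  have hmono' : ∀ᵐ x ∂μ, Monotone fun n => μ[g n|m] x := by
    have hstep : ∀ n, μ[g n|m] ≤ᵐ[μ] μ[g (n + 1)|m] := fun n => condExp_mono (hg n) (hg (n + 1))
      (by filter_upwards [hmono] with x hx using hx n.le_succ)
    filter_upwards [ae_all_iff.2 hstep] with x hx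
    exact monotone_nat_of_le_succ hx
  obtain ⟨H, hHint, hHle, hHtend⟩ := exists_ae_tendsto_of_monotone_of_ae_le
    (fun _ => integrable_condExp) integrable_condExp hmono'
    (fun n => condExp_mono (hg n) hY (hle n))
  -- `H ≤ μ[Y|m]` and both have the integral `lim ∫ g n = ∫ Y`.
  have hH : H =ᵐ[μ] μ[Y|m] := by
    refine (integral_eq_iff_of_ae_le hHint integrable_condExp hHle).1 ?_
    refine tendsto_nhds_unique
      (integral_tendsto_of_tendsto_of_monotone (fun _ => integrable_condExp) hHint hmono' hHtend) ?_
    simp_rw [integral_condExp hm]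
    exact integral_tendsto_of_tendsto_of_monotone hg hY hmono htend
  filter_upwards [hHtend, hH] with x hx hxH
  rwa [← hxH]

end MonotoneConvergence

section EssentialSupremum

variable {α : Type*} {m0 : MeasurableSpace α} {μ : Measure[m0] α}

lemma exists_monotone_tendsto_sSup_integral {F : Set (α → ℝ)} (hFint : ∀ f ∈ F, Integrable f μ)
    (hFne : F.Nonempty) (hbdd : BddAbove ((fun f => ∫ x, f x ∂μ) '' F))
    (hdir : ∀ f₁ ∈ F, ∀ f₂ ∈ F, ∃ f₃ ∈ F, f₁ ⊔ f₂ ≤ᵐ[μ] f₃) :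
    ∃ g : ℕ → α → ℝ, (∀ n, g n ∈ F) ∧ (∀ᵐ x ∂μ, Monotone fun n => g n x) ∧
      Tendsto (fun n => ∫ x, g n x ∂μ) atTop (𝓝 (sSup ((fun f => ∫ x, f x ∂μ) '' F))) := by
  obtain ⟨u, -, hu, huF⟩ := exists_seq_tendsto_sSup (hFne.image _) hbdd
  choose f hfF hfu using huF
  choose! up hupF hup using hdir
  let g : ℕ → α → ℝ := fun n => Nat.rec (f 0) (fun n gn => up gn (f (n + 1))) n
  have hgF : ∀ n, g n ∈ F := fun n => by
    induction n with
    | zero => exact hfF 0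
    | succ n ih => exact hupF _ ih _ (hfF _)
  have hgsucc : ∀ n, g n ⊔ f (n + 1) ≤ᵐ[μ] g (n + 1) := fun n => hup _ (hgF n) _ (hfF _)
  have hfg : ∀ n, ∫ x, f n x ∂μ ≤ ∫ x, g n x ∂μ := by
    rintro (_ | n)
    · rfl
    · refine integral_mono_ae (hFint _ (hfF _)) (hFint _ (hgF (n + 1))) ?_
      filter_upwards [hgsucc n] with x hx using le_sup_right.trans hx
  refine ⟨g, hgF, ?_, tendsto_of_tendsto_of_tendsto_of_le_of_le hu tendsto_const_nhds
    (fun n => (hfu n).symm.le.trans (hfg n)) (fun n => le_csSup hbdd ⟨g n, hgF n, rfl⟩)⟩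
  filter_upwards [ae_all_iff.2 hgsucc] with x hx
  exact monotone_nat_of_le_succ fun n => le_sup_left.trans (hx n)

lemma ae_le_of_integral_sup_le {g : ℕ → α → ℝ} {G f : α → ℝ} (hg : ∀ n, Integrable (g n) μ)
    (hG : Integrable G μ) (hf : Integrable f μ) (hmono : ∀ᵐ x ∂μ, Monotone fun n => g n x)
    (htend : ∀ᵐ x ∂μ, Tendsto (fun n => g n x) atTop (𝓝 (G x)))
    (hsup : ∀ n, ∫ x, (g n x ⊔ f x) ∂μ ≤ ∫ x, G x ∂μ) : f ≤ᵐ[μ] G := by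
  have hlim : Tendsto (fun n => ∫ x, (g n x ⊔ f x) ∂μ) atTop (𝓝 (∫ x, (G x ⊔ f x) ∂μ)) := by
    refine integral_tendsto_of_tendsto_of_monotone (fun n => (hg n).sup hf) (hG.sup hf) ?_ ?_
    · filter_upwards [hmono] with x hx using fun a b hab => sup_le_sup_right (hx hab) _
    · filter_upwards [htend] with x hx using hx.sup_nhds tendsto_const_nhds
  have hGsup : G =ᵐ[μ] fun x => G x ⊔ f x :=
    (integral_eq_iff_of_ae_le hG (hG.sup hf) (ae_of_all _ fun _ => le_sup_left)).1
      (le_antisymm (integral_mono hG (hG.sup hf) fun _ => le_sup_left)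
        (le_of_tendsto' hlim hsup))
  filter_upwards [hGsup] with x hx
  exact le_sup_right.trans_eq hx.symm

lemma IsEssSupOf.exists_monotone_ae_tendsto {F : Set (α → ℝ)} {Y : α → ℝ}
    (hY : IsEssSupOf μ F Y) (hYint : Integrable Y μ) (hFint : ∀ f ∈ F, Integrable f μ)
    (hFne : F.Nonempty) (hdir : ∀ f₁ ∈ F, ∀ f₂ ∈ F, ∃ f₃ ∈ F, f₁ ⊔ f₂ ≤ᵐ[μ] f₃) :
    ∃ g : ℕ → α → ℝ, (∀ n, g n ∈ F) ∧ (∀ᵐ x ∂μ, Monotone fun n => g n x) ∧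
      ∀ᵐ x ∂μ, Tendsto (fun n => g n x) atTop (𝓝 (Y x)) := by
  set s := sSup ((fun f => ∫ x, f x ∂μ) '' F)
  have hbdd : BddAbove ((fun f => ∫ x, f x ∂μ) '' F) := ⟨∫ x, Y x ∂μ, by
    rintro _ ⟨f, hf, rfl⟩
    exact integral_mono_ae (hFint f hf) hYint (hY.1 f hf)⟩
  obtain ⟨g, hgF, hmono, hgs⟩ := exists_monotone_tendsto_sSup_integral hFint hFne hbdd hdir
  have hgint : ∀ n, Integrable (g n) μ := fun n => hFint _ (hgF n)
  obtain ⟨G, hGint, hGY, hgG⟩ :=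
    exists_ae_tendsto_of_monotone_of_ae_le hgint hYint hmono fun n => hY.1 _ (hgF n)
  have hGs : ∫ x, G x ∂μ = s :=
    tendsto_nhds_unique (integral_tendsto_of_tendsto_of_monotone hgint hGint hmono hgG) hgs
  have hFG : ∀ f ∈ F, f ≤ᵐ[μ] G := fun f hf => by
    refine ae_le_of_integral_sup_le hgint hGint (hFint f hf) hmono hgG fun n => ?_
    obtain ⟨f', hf'F, hf'⟩ := hdir _ (hgF n) f hf
    calc ∫ x, (g n x ⊔ f x) ∂μ ≤ ∫ x, f' x ∂μ :=
          integral_mono_ae ((hgint n).sup (hFint f hf)) (hFint f' hf'F) hf'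
      _ ≤ ∫ x, G x ∂μ := hGs ▸ le_csSup hbdd ⟨f', hf'F, rfl⟩
  have hYG : Y =ᵐ[μ] G := (hY.2 G hFG).antisymm hGY
  refine ⟨g, hgF, hmono, ?_⟩
  filter_upwards [hgG, hYG] with x hx hxY
  rwa [hxY]

end EssentialSupremum

section Pasting

variable {α : Type*} {G m0 : MeasurableSpace α} {P Q₁ Q₂ : Measure[m0] α} {Λ : Set α}

lemma EqOnSA.restrict_add_restrict (hG : G ≤ m0) (h₁ : EqOnSA G Q₁ P) (h₂ : EqOnSA G Q₂ P)
    (hΛ : MeasurableSet[G] Λ) : EqOnSA G (Q₁.restrict Λ + Q₂.restrict Λᶜ) P := by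
  intro A hA
  rw [Measure.add_apply, Measure.restrict_apply (hG A hA), Measure.restrict_apply (hG A hA),
    h₁ _ (hA.inter hΛ), h₂ _ (hA.inter hΛ.compl), ← Set.sdiff_eq]
  exact measure_inter_add_sdiff A (hG Λ hΛ)

lemma setIntegral_restrict_add_restrict {s : Set α} (hs : MeasurableSet s) {φ : α → ℝ}
    (h₁ : IntegrableOn φ Λ Q₁) (h₂ : IntegrableOn φ Λᶜ Q₂) :
    ∫ x in s, φ x ∂(Q₁.restrict Λ + Q₂.restrict Λᶜ)
      = ∫ x in s ∩ Λ, φ x ∂Q₁ + ∫ x in s ∩ Λᶜ, φ x ∂Q₂ := by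
  rw [Measure.restrict_add, integral_add_measure h₁.integrable.restrict h₂.integrable.restrict,
    Measure.restrict_restrict hs, Measure.restrict_restrict hs]

lemma isPastingOf_restrict_add_restrict (hG : G ≤ m0) [IsFiniteMeasure Q₁] [IsFiniteMeasure Q₂]
    (h₁ : EqOnSA G Q₁ P) (h₂ : EqOnSA G Q₂ P) (hΛ : MeasurableSet[G] Λ) :
    IsPastingOf m0 G P Q₁ Q₂ (Q₁.restrict Λ + Q₂.restrict Λᶜ) Λ := by
  rintro h hmeas ⟨C, hC⟩
  have hint : ∀ (Q : Measure[m0] α) [IsFiniteMeasure Q], Integrable h Q := fun Q _ =>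
    Integrable.of_bound hmeas.aestronglyMeasurable C (ae_of_all _ hC)
  have hpiece : ∀ {Q : Measure[m0] α} [IsFiniteMeasure Q], EqOnSA G Q P →
      ∀ {S : Set α}, MeasurableSet[G] S →
        Integrable (S.indicator (Q[h|G])) P ∧ ∫ x, S.indicator (Q[h|G]) x ∂P = ∫ x in S, h x ∂Q :=
    fun {Q} _ hQ {S} hS => by
      refine ⟨(hQ.integrable hG stronglyMeasurable_condExp integrable_condExp).indicator
        (hG S hS), ?_⟩
      rw [← hQ.integral_eq hG (stronglyMeasurable_condExp.indicator hS),
        integral_indicator (hG S hS)]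
      exact setIntegral_condExp hG (hint Q) hS
  rw [integral_add_measure (hint Q₁).restrict (hint Q₂).restrict,
    integral_add (hpiece h₁ hΛ).1 (hpiece h₂ hΛ.compl).1, (hpiece h₁ hΛ).2,
    (hpiece h₂ hΛ.compl).2]

lemma condExp_restrict_add_restrict (hG : G ≤ m0) [IsFiniteMeasure Q₁] [IsFiniteMeasure Q₂]
    [DecidablePred (· ∈ Λ)] (hΛ : MeasurableSet[G] Λ) {f : α → ℝ} (hf₁ : Integrable f Q₁) (hf₂ : Integrable f Q₂) :
    Λ.piecewise (Q₁[f|G]) (Q₂[f|G])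
      =ᵐ[Q₁.restrict Λ + Q₂.restrict Λᶜ] (Q₁.restrict Λ + Q₂.restrict Λᶜ)[f|G] := by
  have hΛ' : MeasurableSet Λ := hG Λ hΛ
  have hon₁ : EqOn (Λ.piecewise (Q₁[f|G]) (Q₂[f|G])) (Q₁[f|G]) Λ :=
    fun _ hx => Set.piecewise_eq_of_mem _ _ _ hx
  have hon₂ : EqOn (Λ.piecewise (Q₁[f|G]) (Q₂[f|G])) (Q₂[f|G]) Λᶜ :=
    fun _ hx => Set.piecewise_eq_of_notMem _ _ _ hx
  have hint₁ := integrable_condExp.integrableOn.congr_fun hon₁.symm hΛ'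
  have hint₂ := integrable_condExp.integrableOn.congr_fun hon₂.symm hΛ'.compl
  refine ae_eq_condExp_of_forall_setIntegral_eq hG (hf₁.restrict.add_measure hf₂.restrict)
    (fun _ _ _ => (hint₁.integrable.add_measure hint₂.integrable).integrableOn) (fun s hs _ => ?_)
    (stronglyMeasurable_condExp.piecewise hΛ stronglyMeasurable_condExp).aestronglyMeasurable
  have hs' : MeasurableSet s := hG s hs
  rw [setIntegral_restrict_add_restrict hs' hint₁ hint₂,
    setIntegral_restrict_add_restrict hs' hf₁.integrableOn hf₂.integrableOn,
    setIntegral_congr_fun (hs'.inter hΛ') (hon₁.mono inter_subset_right),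
    setIntegral_congr_fun (hs'.inter hΛ'.compl) (hon₂.mono inter_subset_right),
    setIntegral_condExp hG hf₁ (hs.inter hΛ), setIntegral_condExp hG hf₂ (hs.inter hΛ.compl)]

lemma condExpFam_directed (hG : G ≤ m0) {𝔓 : Set (Measure[m0] α)}
    (hfin : ∀ Q ∈ 𝔓, IsFiniteMeasure Q) {X : α → ℝ} (hX : ∀ Q ∈ 𝔓, Integrable X Q)
    (hpaste : ∀ Q₁ ∈ MSet 𝔓 G P, ∀ Q₂ ∈ MSet 𝔓 G P, ∀ Λ : Set α, MeasurableSet[G] Λ →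
      Q₁.restrict Λ + Q₂.restrict Λᶜ ∈ 𝔓) :
    ∀ f₁ ∈ condExpFam 𝔓 G P X, ∀ f₂ ∈ condExpFam 𝔓 G P X,
      ∃ f₃ ∈ condExpFam 𝔓 G P X, f₁ ⊔ f₂ ≤ᵐ[P] f₃ := by
  classical
  rintro _ ⟨Q₁, hQ₁, rfl⟩ _ ⟨Q₂, hQ₂, rfl⟩
  have := hfin Q₁ hQ₁.1
  have := hfin Q₂ hQ₂.1
  -- Paste `Q₁` where its conditional expectation is the larger one, and `Q₂` elsewhere.
  set Λ := {x | Q₂[X|G] x ≤ Q₁[X|G] x}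
  have hΛ : MeasurableSet[G] Λ :=
    stronglyMeasurable_condExp.measurableSet_le stronglyMeasurable_condExp
  have hPaste := hQ₁.2.restrict_add_restrict hG hQ₂.2 hΛ
  have hsup : Q₁[X|G] ⊔ Q₂[X|G] = Λ.piecewise (Q₁[X|G]) (Q₂[X|G]) := by
    ext x
    by_cases hx : x ∈ Λ
    · rw [Set.piecewise_eq_of_mem _ _ _ hx]
      exact sup_eq_left.2 hx
    · rw [Set.piecewise_eq_of_notMem _ _ _ hx]
      exact sup_eq_right.2 (not_le.1 hx).le
  refine ⟨_, ⟨_, ⟨hpaste Q₁ hQ₁ Q₂ hQ₂ Λ hΛ, hPaste⟩, rfl⟩, hsup ▸ EventuallyEq.le ?_⟩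
  exact hPaste.ae_eq hG (stronglyMeasurable_condExp.piecewise hΛ stronglyMeasurable_condExp)
    stronglyMeasurable_condExp (condExp_restrict_add_restrict hG hΛ (hX Q₁ hQ₁.1) (hX Q₂ hQ₂.1))

end Pasting

section TimeConsistency

variable {α : Type*} {m m' m0 : MeasurableSpace α} {𝔓 : Set (Measure[m0] α)}
  {P P' : Measure[m0] α} {X Y : α → ℝ}

lemma condExp_le_condExp_of_isEssSupOf (hmm' : m ≤ m') (hm' : m' ≤ m0) [IsFiniteMeasure P']
    (hP' : P' ∈ MSet 𝔓 m P) (hY : IsEssSupOf P' (condExpFam 𝔓 m' P' X) Y)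
    (hYint : Integrable Y P') : P'[X|m] ≤ᵐ[P] P'[Y|m] := by
  have hXY : P'[X|m'] ≤ᵐ[P'] Y := hY.1 _ ⟨P', ⟨hP'.1, fun _ _ => rfl⟩, rfl⟩
  refine hP'.2.ae_le (hmm'.trans hm') stronglyMeasurable_condExp stronglyMeasurable_condExp ?_
  exact (condExp_condExp_of_le hmm' hm').symm.le.trans
    (condExp_mono integrable_condExp hYint hXY)

lemma condExp_le_of_isEssSupOf_of_directed (hmm' : m ≤ m') (hm' : m' ≤ m0)
    (hfin : ∀ Q ∈ 𝔓, IsFiniteMeasure Q) (hP' : P' ∈ MSet 𝔓 m P)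
    (hdir : ∀ f₁ ∈ condExpFam 𝔓 m' P' X, ∀ f₂ ∈ condExpFam 𝔓 m' P' X,
      ∃ f₃ ∈ condExpFam 𝔓 m' P' X, f₁ ⊔ f₂ ≤ᵐ[P'] f₃)
    (hY : IsEssSupOf P' (condExpFam 𝔓 m' P' X) Y) (hYint : Integrable Y P') {Z : α → ℝ}
    (hZ : ∀ f ∈ condExpFam 𝔓 m P X, f ≤ᵐ[P] Z) : P'[Y|m] ≤ᵐ[P] Z := by
  have hm : m ≤ m0 := hmm'.trans hm'
  have := hfin P' hP'.1
  have hFint : ∀ f ∈ condExpFam 𝔓 m' P' X, Integrable f P' := by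
    rintro _ ⟨Q, hQ, rfl⟩
    exact hQ.2.integrable hm' stronglyMeasurable_condExp integrable_condExp
  obtain ⟨g, hgF, hmono, htend⟩ :=
    hY.exists_monotone_ae_tendsto hYint hFint ⟨_, P', ⟨hP'.1, fun _ _ => rfl⟩, rfl⟩ hdir
  have hlim := ae_tendsto_condExp_of_monotone hm (fun n => hFint _ (hgF n)) hYint hmono htend
  choose Q hQ hgQ using hgF
  have hk : ∀ n, (Q n)[X|m] =ᵐ[P'] P'[g n|m] := fun n => by
    have := hfin _ (hQ n).1
    rw [hgQ n]
    exact condExp_ae_eq_condExp_condExp_of_eqOnSA hmm' hm' (hQ n).2 X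
  have hYsup : P'[Y|m] ≤ᵐ[P] fun x => ⨆ n, (Q n)[X|m] x := by
    refine hP'.2.ae_le hm stronglyMeasurable_condExp
      (Measurable.iSup fun n => stronglyMeasurable_condExp.measurable).stronglyMeasurable ?_
    filter_upwards [hlim, ae_all_iff.2 hk] with x hx hkx
    simp only [← hkx] at hx
    exact le_of_tendsto' hx fun n => le_ciSup hx.bddAbove_range n
  have hQP : ∀ n, Q n ∈ MSet 𝔓 m P := fun n => ⟨(hQ n).1, ((hQ n).2.mono hmm').trans hP'.2⟩
  filter_upwards [hYsup, ae_all_iff.2 fun n => hZ _ ⟨Q n, hQP n, rfl⟩] with x hx hZx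
  exact hx.trans (ciSup_le hZx)

end TimeConsistency

lemma StableUnderPasting.restrict_add_restrict_mem {T : ℝ} {d : ℕ}
    {𝔓 : Set (@Measure (PathSpace d) (rawSA d T))} (hstable : StableUnderPasting T d 𝔓)
    (hfin : ∀ Q ∈ 𝔓, IsFiniteMeasure Q) {P : @Measure (PathSpace d) (rawSA d T)} (hP : P ∈ 𝔓)
    {τ : PathSpace d → ℝ} (hτ : IsStoppingTime (rawFilt T d) (fun ω => (τ ω : WithTop ℝ)))
    (hτfin : (Set.range τ).Finite) (hτmem : ∀ ω, τ ω ∈ Set.Icc (0 : ℝ) T) :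
    ∀ Q₁ ∈ MSet 𝔓 hτ.measurableSpace P, ∀ Q₂ ∈ MSet 𝔓 hτ.measurableSpace P,
      ∀ Λ, MeasurableSet[hτ.measurableSpace] Λ → Q₁.restrict Λ + Q₂.restrict Λᶜ ∈ 𝔓 := by
  intro Q₁ hQ₁ Q₂ hQ₂ Λ hΛ
  have := hfin Q₁ hQ₁.1
  have := hfin Q₂ hQ₂.1
  exact hstable P hP τ hτ hτfin hτmem Λ hΛ Q₁ hQ₁ Q₂ hQ₂ _
    (isPastingOf_restrict_add_restrict hτ.measurableSpace_le hQ₁.2 hQ₂.2 hΛ)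

theorem statement2_general {T : ℝ} {d : ℕ}
    (𝔓 : Set (@Measure (PathSpace d) (rawSA d T)))
    (hprob : ∀ P ∈ 𝔓, IsProbabilityMeasure P)
    (hstable : StableUnderPasting T d 𝔓)
    (X : PathSpace d → ℝ) (hX : MemL1 (rawSA d T) 𝔓 X)
    (σ τ : PathSpace d → ℝ)
    (hσ : IsStoppingTime (rawFilt T d) (fun ω => (σ ω : WithTop ℝ)))
    (hτ : IsStoppingTime (rawFilt T d) (fun ω => (τ ω : WithTop ℝ)))
    (hτfin : (Set.range τ).Finite)
    (hτmem : ∀ ω, τ ω ∈ Set.Icc (0 : ℝ) T)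
    (hστ : ∀ ω, σ ω ≤ τ ω)
    (P : @Measure (PathSpace d) (rawSA d T))
    -- for each `P' ∈ 𝔓(F°_σ, P)`, a version `Y P'` of the inner essential supremum
    (Y : @Measure (PathSpace d) (rawSA d T) → PathSpace d → ℝ)
    (hY : ∀ P' ∈ MSet 𝔓 hσ.measurableSpace P,
      Measurable[hτ.measurableSpace] (Y P') ∧ Integrable (Y P') P' ∧
      IsEssSupOf P' (condExpFam 𝔓 hτ.measurableSpace P' X) (Y P')) :
    -- the two essential suprema at `σ` coincide `P`-a.s.
    ∀ Z₁ Z₂ : PathSpace d → ℝ,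
      IsEssSupOf P {g | ∃ P' ∈ MSet 𝔓 hσ.measurableSpace P,
        g = condExp hσ.measurableSpace P' (Y P')} Z₁ →
      IsEssSupOf P (condExpFam 𝔓 hσ.measurableSpace P X) Z₂ →
      Z₁ =ᵐ[P] Z₂ := by
  intro Z₁ Z₂ hZ₁ hZ₂
  have hτle : hτ.measurableSpace ≤ rawSA d T := hτ.measurableSpace_le
  have hστle : hσ.measurableSpace ≤ hτ.measurableSpace :=
    hσ.measurableSpace_mono hτ fun ω => WithTop.coe_le_coe.2 (hστ ω)
  have hfin : ∀ Q ∈ 𝔓, IsFiniteMeasure Q := fun Q hQ => by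
    have := hprob Q hQ
    infer_instance
  refine (hZ₁.2 Z₂ ?_).antisymm (hZ₂.2 Z₁ ?_)
  · rintro _ ⟨P', hP', rfl⟩
    have hdir := condExpFam_directed hτle hfin hX.2.1
      (hstable.restrict_add_restrict_mem hfin hP'.1 hτ hτfin hτmem)
    exact condExp_le_of_isEssSupOf_of_directed hστle hτle hfin hP' hdir (hY P' hP').2.2
      (hY P' hP').2.1 hZ₂.1
  · rintro _ ⟨P', hP', rfl⟩
    have := hprob P' hP'.1
    exact (condExp_le_condExp_of_isEssSupOf hστle hτle hP' (hY P' hP').2.2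
      (hY P' hP').2.1).trans (hZ₁.1 _ ⟨P', hP', rfl⟩)

/-- stability under `F°`-pasting implies `F°`-time-consistency of `𝔓` on `L¹_𝔓`. -/
theorem statement2 {T : ℝ} (hT : 0 < T) {d : ℕ}
    (𝔓 : Set (@Measure (PathSpace d) (rawSA d T))) (h𝔓 : 𝔓.Nonempty)
    (hprob : ∀ P ∈ 𝔓, IsProbabilityMeasure P)
    (hstable : StableUnderPasting T d 𝔓)
    (X : PathSpace d → ℝ) (hX : MemL1 (rawSA d T) 𝔓 X)
    (σ τ : PathSpace d → ℝ)
    (hσ : IsStoppingTime (rawFilt T d) (fun ω => (σ ω : WithTop ℝ)))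
    (hτ : IsStoppingTime (rawFilt T d) (fun ω => (τ ω : WithTop ℝ)))
    (hσfin : (Set.range σ).Finite) (hτfin : (Set.range τ).Finite)
    (hσmem : ∀ ω, σ ω ∈ Set.Icc (0 : ℝ) T) (hτmem : ∀ ω, τ ω ∈ Set.Icc (0 : ℝ) T)
    (hστ : ∀ ω, σ ω ≤ τ ω)
    (P : @Measure (PathSpace d) (rawSA d T)) (hP : P ∈ 𝔓)
    -- for each `P' ∈ 𝔓(F°_σ, P)`, a version `Y P'` of the inner essential supremum
    (Y : @Measure (PathSpace d) (rawSA d T) → PathSpace d → ℝ)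
    (hY : ∀ P' ∈ MSet 𝔓 hσ.measurableSpace P,
      Measurable[hτ.measurableSpace] (Y P') ∧ Integrable (Y P') P' ∧
      IsEssSupOf P' (condExpFam 𝔓 hτ.measurableSpace P' X) (Y P')) :
    -- the two essential suprema at `σ` coincide `P`-a.s.
    ∀ Z₁ Z₂ : PathSpace d → ℝ,
      IsEssSupOf P {g | ∃ P' ∈ MSet 𝔓 hσ.measurableSpace P,
        g = condExp hσ.measurableSpace P' (Y P')} Z₁ →
      IsEssSupOf P (condExpFam 𝔓 hσ.measurableSpace P X) Z₂ →
      Z₁ =ᵐ[P] Z₂ :=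
  statement2_general 𝔓 hprob hstable X hX σ τ hσ hτ hτfin hτmem hστ P Y hY
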